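/- For the points a = (1,0) and b = (−1,0) of S² one has q(a) ≠ q(b), yet every open subset of X containing q(a) intersects every open subset of X containing q(b). In particular, the twisted sphere X is not Hausdorff. -/

import Mathlib

/-!
An `r₀`-step never starts at a point with `z = 0` and preserves `z`, so the class of an
equator point `(c, 0)` is a singleton, and `q(c, 0) ≠ q(-c, 0)`. On the other hand, the
meridians `t ↦ (± cos t · c, sin t)` through `(c, 0)` and `(-c, 0)` are identified by `q`
for `0 < t < π`, so the single curve `q(cos t · c, sin t)` converges, as `t → 0⁺`, to both
`q(c, 0)` and `q(-c, 0)`.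
-/

noncomputable section

/-- The 2-sphere, realized as the unit sphere `{(c,z) : |c|² + z² = 1}` in `ℂ × ℝ`,
with the subspace topology. -/
def TwoSphere : Set (ℂ × ℝ) := {p | ‖p.1‖ ^ 2 + p.2 ^ 2 = 1}

/-- The relation `r₀` on `S²`: `r₀ (c,z) (c',z')` iff `z ≠ 0`, `c' = -c` and `z' = z`. -/
def sphRel (a b : TwoSphere) : Prop :=
  a.1.2 ≠ 0 ∧ b.1.1 = -a.1.1 ∧ b.1.2 = a.1.2

/-- The twisted sphere `X`: the quotient of `S²` by the equivalence relation generated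
by `r₀`, with the quotient topology. -/
abbrev TwistedSphere : Type := Quot (Relation.EqvGen sphRel)

/-- The quotient map `q : S² → X`. -/
abbrev sphQ : TwoSphere → TwistedSphere := Quot.mk (Relation.EqvGen sphRel)

/-- The point `a = (1,0)` of `S²`. -/
def ptA : TwoSphere := ⟨((1 : ℂ), (0 : ℝ)), by simp [TwoSphere]⟩

/-- The point `b = (-1,0)` of `S²`. -/
def ptB : TwoSphere := ⟨((-1 : ℂ), (0 : ℝ)), by simp [TwoSphere]⟩

open Filter Topology

lemma Filter.Tendsto.nonempty_inter_of_mem_nhds {α X : Type*} [TopologicalSpace X]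
    {l : Filter α} [l.NeBot] {f : α → X} {x y : X} (hx : Tendsto f l (𝓝 x))
    (hy : Tendsto f l (𝓝 y)) {O₁ O₂ : Set X} (h₁ : O₁ ∈ 𝓝 x) (h₂ : O₂ ∈ 𝓝 y) :
    (O₁ ∩ O₂).Nonempty :=
  haveI := (tendsto_inf.2 ⟨hx, hy⟩).neBot
  Filter.nonempty_of_mem (inter_mem_inf h₁ h₂)

lemma eqvGen_sphRel_z_eq_and_eq_of_z_eq_zero {x y : TwoSphere} (h : Relation.EqvGen sphRel x y) :
    x.1.2 = y.1.2 ∧ (x.1.2 = 0 → x = y) := by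
  induction h with
  | rel a b hab => exact ⟨hab.2.2.symm, fun h0 => absurd h0 hab.1⟩
  | refl a => exact ⟨rfl, fun _ => rfl⟩
  | symm a b _ ih => exact ⟨ih.1.symm, fun h0 => (ih.2 (ih.1.trans h0)).symm⟩
  | trans a b c _ _ ih₁ ih₂ =>
      exact ⟨ih₁.1.trans ih₂.1, fun h0 => (ih₁.2 h0).trans (ih₂.2 (ih₁.1.symm.trans h0))⟩

lemma eq_of_sphQ_eq_of_z_eq_zero {x y : TwoSphere} (hx : x.1.2 = 0) (h : sphQ x = sphQ y) :
    x = y :=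
  (eqvGen_sphRel_z_eq_and_eq_of_z_eq_zero
    ((Relation.EqvGen.is_equivalence sphRel).eqvGen_iff.mp (Quot.eqvGen_exact h))).2 hx

def equatorPt (c : ℂ) (hc : ‖c‖ = 1) : TwoSphere := ⟨(c, 0), by simp [TwoSphere, hc]⟩

def meridian (c : ℂ) (hc : ‖c‖ = 1) (t : ℝ) : TwoSphere :=
  ⟨((Real.cos t : ℂ) * c, Real.sin t), by
    simp only [TwoSphere, Set.mem_ofPred_eq, norm_mul, Complex.norm_real, Real.norm_eq_abs, hc,
      mul_one, sq_abs, Real.cos_sq_add_sin_sq]⟩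

lemma continuous_meridian (c : ℂ) (hc : ‖c‖ = 1) : Continuous (meridian c hc) := by
  unfold meridian
  fun_prop

lemma meridian_zero (c : ℂ) (hc : ‖c‖ = 1) : meridian c hc 0 = equatorPt c hc := by
  ext <;> simp [meridian, equatorPt]

lemma sphRel_meridian_neg (c : ℂ) (hc : ‖c‖ = 1) {t : ℝ} (ht : Real.sin t ≠ 0) :
    sphRel (meridian c hc t) (meridian (-c) ((norm_neg c).trans hc) t) :=
  ⟨ht, mul_neg _ _, rfl⟩

lemma sphQ_equatorPt_ne_neg (c : ℂ) (hc : ‖c‖ = 1) :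
    sphQ (equatorPt c hc) ≠ sphQ (equatorPt (-c) ((norm_neg c).trans hc)) := by
  intro h
  have hc₀ : c ≠ 0 := norm_ne_zero_iff.mp (hc.trans_ne one_ne_zero)
  have : c = -c := congrArg (fun p : TwoSphere => p.1.1) (eq_of_sphQ_eq_of_z_eq_zero rfl h)
  exact hc₀ (self_eq_neg.mp this)

lemma tendsto_sphQ_meridian (c : ℂ) (hc : ‖c‖ = 1) :
    Tendsto (fun t => sphQ (meridian c hc t)) (𝓝[>] 0) (𝓝 (sphQ (equatorPt c hc))) := by
  have h : Tendsto (sphQ ∘ meridian c hc) (𝓝 0) (𝓝 (sphQ (meridian c hc 0))) :=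
    (continuous_quot_mk.comp (continuous_meridian c hc)).tendsto 0
  rw [meridian_zero] at h
  exact h.mono_left nhdsWithin_le_nhds

lemma tendsto_sphQ_meridian_neg (c : ℂ) (hc : ‖c‖ = 1) :
    Tendsto (fun t => sphQ (meridian c hc t)) (𝓝[>] 0)
      (𝓝 (sphQ (equatorPt (-c) ((norm_neg c).trans hc)))) := by
  refine (tendsto_sphQ_meridian (-c) _).congr' ?_
  filter_upwards [Ioo_mem_nhdsGT Real.pi_pos] with t ht
  exact (Quot.sound (.rel _ _
    (sphRel_meridian_neg c hc (Real.sin_pos_of_pos_of_lt_pi ht.1 ht.2).ne'))).symm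

end

theorem stmt_7 :
    sphQ ptA ≠ sphQ ptB ∧
    (∀ O₁ O₂ : Set TwistedSphere, IsOpen O₁ → IsOpen O₂ →
      sphQ ptA ∈ O₁ → sphQ ptB ∈ O₂ → (O₁ ∩ O₂).Nonempty) ∧
    ¬ T2Space TwistedSphere := by
  have hA := tendsto_sphQ_meridian 1 norm_one
  have hB := tendsto_sphQ_meridian_neg 1 norm_one
  have hne : sphQ ptA ≠ sphQ ptB := sphQ_equatorPt_ne_neg 1 norm_one
  refine ⟨hne, fun O₁ O₂ h₁ h₂ hA₁ hB₂ => ?_, fun _ => hne (tendsto_nhds_unique hA hB)⟩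
  exact hA.nonempty_inter_of_mem_nhds hB (h₁.mem_nhds hA₁) (h₂.mem_nhds hB₂)
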